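/- arXiv:2603.19419 — 2 statements merged into one kernel-verified Lean document; each statement's English description precedes it below -/
import Mathlib

section
/- Let γ be an ℓ-cover of a matroid M on a finite ground set and let F and G both be focal bases of γ. (i) If A ⊆ F \ G and B ⊆ G \ F are such that both (F \ A) ∪ B and (G \ B) ∪ A are bases of M, then γ(A) = γ(B), and A ⊆ supp(γ) if and only if B ⊆ supp(γ). (ii) If σ : (F \ G) → (G \ F) is a bijection such that (F \ {i}) ∪ {σ(i)} is a basis of M for every i ∈ F \ G, then γ(i) = γ(σ(i)) for every i ∈ F \ G. -/
open Matroid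

/-- The total weight `γ(F) = ∑_{i ∈ F} γ(i)` of a finite set `F` under `γ`. -/
noncomputable def setWt {α : Type*} [Fintype α] (γ : α → ℕ) (F : Set α) : ℕ :=
  ∑ i ∈ F.toFinite.toFinset, γ i

/-- `γ` is an `ℓ`-cover of the family `𝒟` if `γ(F) ≥ ℓ` for every `F ∈ 𝒟`. -/
def IsCoverOn {α : Type*} [Fintype α] (𝒟 : Set (Set α)) (ℓ : ℕ) (γ : α → ℕ) : Prop :=
  ∀ F ∈ 𝒟, ℓ ≤ setWt γ F

/-!
Exchanging `A ⊆ F` for `B` (disjoint from `F`) in a focal basis `F` gives a basis of weight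
`ℓ - γ(A) + γ(B) ≥ ℓ`, so `γ(A) ≤ γ(B)`; the two exchanges of (i) give both inequalities.
For the supports, every `j ∈ B` can be swapped into `F` against a single `y ∈ A` (basis
exchange in the dual matroid), so `0 < γ y ≤ γ j`. In (ii) each single exchange gives
`γ i ≤ γ (σ i)`, while `σ` carries `F \ G` onto `G \ F`, and these two sets have equal weight
because `F` and `G` do; hence all the inequalities are equalities.
-/

namespace Matroid

variable {α : Type*} {M : Matroid α} {B₁ B₂ : Set α} {e : α}

theorem IsBase.rev_exchange (hB₁ : M.IsBase B₁) (hB₂ : M.IsBase B₂) (he : e ∈ B₂ \ B₁) :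
    ∃ f ∈ B₁ \ B₂, M.IsBase ((B₁ \ {f}) ∪ {e}) := by
  have heE : e ∈ M.E := hB₂.subset_ground he.1
  obtain ⟨f, hf, hbase⟩ := hB₁.compl_isBase_dual.exchange hB₂.compl_isBase_dual
    (show e ∈ (M.E \ B₁) \ (M.E \ B₂) by simp [heE, he.1, he.2])
  have hfB₁ : f ∈ B₁ := by simpa [hf.1.1] using hf.2
  refine ⟨f, ⟨hfB₁, hf.1.2⟩, ?_⟩
  convert hbase.compl_isBase_of_dual using 1
  ext x
  have hxE : x ∈ B₁ → x ∈ M.E := fun hx ↦ hB₁.subset_ground hx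
  by_cases hxe : x = e <;> by_cases hxf : x = f <;> aesop

end Matroid

section setWt

variable {α : Type*} [Fintype α] (γ : α → ℕ)

theorem setWt_eq_finsum_mem (F : Set α) : setWt γ F = ∑ᶠ i ∈ F, γ i :=
  (finsum_mem_eq_finite_toFinset_sum γ F.toFinite).symm

theorem setWt_singleton (i : α) : setWt γ {i} = γ i := by
  simp [setWt_eq_finsum_mem]

theorem setWt_union {A B : Set α} (h : Disjoint A B) :
    setWt γ (A ∪ B) = setWt γ A + setWt γ B := by
  simp only [setWt_eq_finsum_mem, finsum_mem_union h A.toFinite B.toFinite]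

theorem setWt_inter_add_sdiff (F G : Set α) :
    setWt γ (F ∩ G) + setWt γ (F \ G) = setWt γ F := by
  simp only [setWt_eq_finsum_mem, finsum_mem_inter_add_sdiff G F.toFinite]

theorem setWt_sdiff_eq_of_eq {F G : Set α} (h : setWt γ F = setWt γ G) :
    setWt γ (F \ G) = setWt γ (G \ F) := by
  have hF := setWt_inter_add_sdiff γ F G
  have hG := setWt_inter_add_sdiff γ G F
  rw [Set.inter_comm] at hG
  omega

theorem eq_of_bijOn_of_le_of_setWt_eq {σ : α → α} {S T : Set α} (hσ : Set.BijOn σ S T)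
    (hle : ∀ i ∈ S, γ i ≤ γ (σ i)) (hST : setWt γ S = setWt γ T) :
    ∀ i ∈ S, γ i = γ (σ i) := by
  have hT : setWt γ T = ∑ i ∈ S.toFinite.toFinset, γ (σ i) := by
    rw [setWt_eq_finsum_mem, ← finsum_mem_eq_of_bijOn σ hσ (fun _ _ ↦ rfl),
      finsum_mem_eq_finite_toFinset_sum _ S.toFinite]
  have hsum := (Finset.sum_eq_sum_iff_of_le (fun i hi ↦ hle i (by simpa using hi))).1
    (hST.trans hT)
  exact fun i hi ↦ hsum i (by simpa using hi)

end setWt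

namespace IsCoverOn

variable {α : Type*} [Fintype α] {M : Matroid α} {ℓ : ℕ} {γ : α → ℕ} {F A B : Set α}

theorem setWt_le_of_isBase (hcov : IsCoverOn {F | M.IsBase F} ℓ γ) (hF : setWt γ F = ℓ)
    (hA : A ⊆ F) (hB : Disjoint B F) (h : M.IsBase (F \ A ∪ B)) : setWt γ A ≤ setWt γ B := by
  have hcovH : ℓ ≤ setWt γ (F \ A ∪ B) := hcov _ h
  rw [setWt_union γ (hB.mono_right Set.sdiff_subset).symm] at hcovH
  have hsplit := setWt_inter_add_sdiff γ F A
  rw [Set.inter_eq_right.2 hA] at hsplit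
  omega

theorem le_of_isBase_exchange (hcov : IsCoverOn {F | M.IsBase F} ℓ γ) (hF : setWt γ F = ℓ)
    {i j : α} (hi : i ∈ F) (hj : j ∉ F) (h : M.IsBase (F \ {i} ∪ {j})) : γ i ≤ γ j := by
  simpa only [setWt_singleton] using
    hcov.setWt_le_of_isBase hF (Set.singleton_subset_iff.2 hi) (Set.disjoint_singleton_left.2 hj) h

theorem subset_support_of_isBase (hcov : IsCoverOn {F | M.IsBase F} ℓ γ) (hFb : M.IsBase F)
    (hF : setWt γ F = ℓ) (hB : Disjoint B F) (h : M.IsBase (F \ A ∪ B))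
    (hAγ : A ⊆ Function.support γ) : B ⊆ Function.support γ := by
  intro j hj
  have hjF : j ∉ F := Set.disjoint_left.1 hB hj
  obtain ⟨y, ⟨hyF, hyH⟩, hexch⟩ := hFb.rev_exchange h ⟨Or.inr hj, hjF⟩
  have hyA : y ∈ A := by by_contra hyA; exact hyH (Or.inl ⟨hyF, hyA⟩)
  exact Nat.pos_iff_ne_zero.1 <|
    (Nat.pos_of_ne_zero (hAγ hyA)).trans_le (hcov.le_of_isBase_exchange hF hyF hjF hexch)

end IsCoverOn

theorem stmt2_general {α : Type*} [Fintype α] (M : Matroid α)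
    (ℓ : ℕ) (γ : α → ℕ) (hcov : IsCoverOn {F | M.IsBase F} ℓ γ)
    (F G : Set α) (hF : M.IsBase F) (hFfocal : setWt γ F = ℓ)
    (hG : M.IsBase G) (hGfocal : setWt γ G = ℓ) :
    (∀ A B : Set α, A ⊆ F \ G → B ⊆ G \ F →
      M.IsBase ((F \ A) ∪ B) → M.IsBase ((G \ B) ∪ A) →
      setWt γ A = setWt γ B ∧
        (A ⊆ Function.support γ ↔ B ⊆ Function.support γ)) ∧
    (∀ σ : α → α, Set.BijOn σ (F \ G) (G \ F) →
      (∀ i ∈ F \ G, M.IsBase ((F \ {i}) ∪ {σ i})) →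
      ∀ i ∈ F \ G, γ i = γ (σ i)) := by
  refine ⟨fun A B hA hB hFAB hGBA ↦ ?_, fun σ hσ hexch ↦ ?_⟩
  · have hAF : A ⊆ F := hA.trans Set.sdiff_subset
    have hBG : B ⊆ G := hB.trans Set.sdiff_subset
    have hBF : Disjoint B F := Set.disjoint_of_subset_left hB Set.disjoint_sdiff_left
    have hAG : Disjoint A G := Set.disjoint_of_subset_left hA Set.disjoint_sdiff_left
    exact ⟨le_antisymm (hcov.setWt_le_of_isBase hFfocal hAF hBF hFAB)
        (hcov.setWt_le_of_isBase hGfocal hBG hAG hGBA),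
      hcov.subset_support_of_isBase hF hFfocal hBF hFAB,
      hcov.subset_support_of_isBase hG hGfocal hAG hGBA⟩
  · exact eq_of_bijOn_of_le_of_setWt_eq γ hσ
      (fun i hi ↦ hcov.le_of_isBase_exchange hFfocal hi.1 (hσ.mapsTo hi).2 (hexch i hi))
      (setWt_sdiff_eq_of_eq γ (hFfocal.trans hGfocal.symm))

/-- let `γ` be an `ℓ`-cover of a matroid `M`, and `F`, `G` focal bases of `γ`.
(i) If `A ⊆ F \ G`, `B ⊆ G \ F` and both `(F \ A) ∪ B` and `(G \ B) ∪ A` are bases, then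
`γ(A) = γ(B)`, and `A ⊆ supp γ ↔ B ⊆ supp γ`.
(ii) If `σ : (F \ G) → (G \ F)` is a bijection with `(F \ {i}) ∪ {σ i}` a basis for every
`i ∈ F \ G`, then `γ(i) = γ(σ i)` for every `i ∈ F \ G`. -/
theorem stmt2 {α : Type*} [Fintype α] (M : Matroid α) (hE : M.E = Set.univ)
    (ℓ : ℕ) (γ : α → ℕ) (hcov : IsCoverOn {F | M.IsBase F} ℓ γ)
    (F G : Set α) (hF : M.IsBase F) (hFfocal : setWt γ F = ℓ)
    (hG : M.IsBase G) (hGfocal : setWt γ G = ℓ) :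
    (∀ A B : Set α, A ⊆ F \ G → B ⊆ G \ F →
      M.IsBase ((F \ A) ∪ B) → M.IsBase ((G \ B) ∪ A) →
      setWt γ A = setWt γ B ∧
        (A ⊆ Function.support γ ↔ B ⊆ Function.support γ)) ∧
    (∀ σ : α → α, Set.BijOn σ (F \ G) (G \ F) →
      (∀ i ∈ F \ G, M.IsBase ((F \ {i}) ∪ {σ i})) →
      ∀ i ∈ F \ G, γ i = γ (σ i)) :=
  stmt2_general M ℓ γ hcov F G hF hFfocal hG hGfocal
end

section
/- Let γ be a basic ℓ-cover of a matroid M on a finite ground set E. Then there exists a matroid M(γ) with ground set E whose bases are exactly the focal bases of γ, i.e., the bases F of M with γ(F) = ℓ. In particular M(γ) has the same rank as M. -/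
open Matroid

/-- An `ℓ`-cover is basic if no pointwise-smaller distinct function is an `ℓ`-cover. -/
def IsBasicCoverOn {α : Type*} [Fintype α] (𝒟 : Set (Set α)) (ℓ : ℕ) (γ : α → ℕ) : Prop :=
  IsCoverOn 𝒟 ℓ γ ∧ ∀ γ' : α → ℕ, γ' ≤ γ → γ' ≠ γ → ¬ IsCoverOn 𝒟 ℓ γ'

namespace Matroid

variable {α : Type*} {M : Matroid α} {B B' : Set α} {e : α}

theorem IsBase.exists_symmetric_exchange (hB : M.IsBase B) (hB' : M.IsBase B')
    (he : e ∈ B \ B') :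
    ∃ f ∈ B' \ B, M.IsBase (insert f (B \ {e})) ∧ M.IsBase (insert e (B' \ {f})) := by
  have heE : e ∈ M.E := hB.subset_ground he.1
  have hC : M.IsCircuit (M.fundCircuit e B') := hB'.fundCircuit_isCircuit heE he.2
  have hK : M.IsCocircuit (M.fundCocircuit e B) := fundCocircuit_isCocircuit he.1 hB
  obtain ⟨f, ⟨hfC, hfK⟩, hfe⟩ := (hC.isCocircuit_inter_nontrivial hK
    ⟨e, M.mem_fundCircuit e B', M.mem_fundCocircuit e B⟩).exists_ne e
  have hfB' : f ∈ B' := by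
    simpa [hfe] using M.fundCircuit_subset_insert e B' hfC
  have hfB : f ∉ B := by
    have := M.fundCocircuit_subset_insert_compl e B hfK
    simp_all
  rw [hB.mem_fundCocircuit_iff_mem_fundCircuit,
    hB.indep.mem_fundCircuit_iff (by rw [hB.closure_eq]; exact hB'.subset_ground hfB') hfB] at hfK
  rw [hB'.indep.mem_fundCircuit_iff (by rwa [hB'.closure_eq]) he.2] at hfC
  rw [← Set.insert_sdiff_singleton_comm hfe] at hfK
  rw [← Set.insert_sdiff_singleton_comm hfe.symm] at hfC
  exact ⟨f, ⟨hfB', hfB⟩, hB.exchange_isBase_of_indep hfB hfK,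
    hB'.exchange_isBase_of_indep he.2 hfC⟩

end Matroid

section Weight

variable {α : Type*} [Fintype α]

lemma setWt_mono {γ γ' : α → ℕ} (h : γ ≤ γ') (F : Set α) : setWt γ F ≤ setWt γ' F :=
  Finset.sum_le_sum fun i _ => h i

lemma setWt_add (γ γ' : α → ℕ) (F : Set α) : setWt (γ + γ') F = setWt γ F + setWt γ' F :=
  Finset.sum_add_distrib

lemma setWt_single_le_one [DecidableEq α] (i : α) (F : Set α) : setWt (Pi.single i 1) F ≤ 1 := by
  unfold setWt
  rw [Finset.sum_pi_single']
  split_ifs <;> omega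

lemma setWt_insert {γ : α → ℕ} {a : α} {F : Set α} (ha : a ∉ F) :
    setWt γ (insert a F) = γ a + setWt γ F := by
  classical
  unfold setWt
  rw [Set.Finite.toFinset_insert, Finset.sum_insert (by simpa using ha)]

lemma setWt_eq_add_setWt_sdiff_singleton {γ : α → ℕ} {a : α} {F : Set α} (ha : a ∈ F) :
    setWt γ F = γ a + setWt γ (F \ {a}) := by
  rw [← setWt_insert (fun h => h.2 rfl), Set.insert_sdiff_singleton, Set.insert_eq_of_mem ha]

lemma setWt_exchange (γ : α → ℕ) {a b : α} {F : Set α} (ha : a ∈ F) (hb : b ∉ F) :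
    setWt γ (insert b (F \ {a})) + γ a = setWt γ F + γ b := by
  rw [setWt_insert (fun h => hb h.1), setWt_eq_add_setWt_sdiff_singleton ha]
  ring

/-- If every member weighed more than `ℓ`, lowering `γ` by one at a point of its support
would still give a cover. -/
lemma IsBasicCoverOn.exists_setWt_eq {𝒟 : Set (Set α)} {ℓ : ℕ} {γ : α → ℕ}
    (hγ : IsBasicCoverOn 𝒟 ℓ γ) (h𝒟 : 𝒟.Nonempty) : ∃ F ∈ 𝒟, setWt γ F = ℓ := by
  classical
  obtain ⟨hcov, hmin⟩ := hγ
  by_contra! hne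
  have hlt : ∀ F ∈ 𝒟, ℓ + 1 ≤ setWt γ F := fun F hF => (hcov F hF).lt_of_ne' (hne F hF)
  by_cases hzero : γ = 0
  · obtain ⟨F, hF⟩ := h𝒟
    have := hlt F hF
    simp [hzero, setWt] at this
  obtain ⟨i, hi⟩ := Function.ne_iff.1 hzero
  refine hmin (γ - Pi.single i 1) tsub_le_self (fun h => hi ?_) fun F hF => ?_
  · have := congrFun h i
    simp only [Pi.sub_apply, Pi.single_eq_same] at this
    simp only [Pi.zero_apply]
    omega
  · have hle : γ ≤ (γ - Pi.single i 1) + Pi.single i 1 := fun j => le_tsub_add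
    have := setWt_mono hle F
    rw [setWt_add] at this
    have := setWt_single_le_one i F
    have := hlt F hF
    omega

end Weight

namespace Matroid

variable {α : Type*} [Fintype α]

lemma exchangeProperty_focalBases (M : Matroid α) {ℓ : ℕ} {γ : α → ℕ}
    (hγ : IsCoverOn {F | M.IsBase F} ℓ γ) :
    ExchangeProperty fun F => M.IsBase F ∧ setWt γ F = ℓ := by
  rintro X Y ⟨hX, hXw⟩ ⟨hY, hYw⟩ a ha
  obtain ⟨b, hb, hXb, hYa⟩ := hX.exists_symmetric_exchange hY ha
  refine ⟨b, hb, hXb, ?_⟩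
  have hXb' := setWt_exchange γ ha.1 hb.2
  have hYa' := setWt_exchange γ hb.1 ha.2
  have := hγ _ hXb
  have := hγ _ hYa
  omega

/-- The matroid `M(γ)`. -/
noncomputable def focalMatroid (M : Matroid α) (ℓ : ℕ) (γ : α → ℕ)
    (hγ : IsCoverOn {F | M.IsBase F} ℓ γ) (hfocal : ∃ B, M.IsBase B ∧ setWt γ B = ℓ) :
    Matroid α :=
  Matroid.ofIsBaseOfFinite M.E.toFinite _ hfocal (M.exchangeProperty_focalBases hγ)
    fun _ hB => hB.1.subset_ground

end Matroid

theorem stmt5_general {α : Type*} [Fintype α] (M : Matroid α)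
    (ℓ : ℕ) (γ : α → ℕ) (hbasic : IsBasicCoverOn {F | M.IsBase F} ℓ γ) :
    ∃ M' : Matroid α, M'.E = M.E ∧
      (∀ F : Set α, M'.IsBase F ↔ (M.IsBase F ∧ setWt γ F = ℓ)) ∧
      (∀ B B' : Set α, M.IsBase B → M'.IsBase B' → B'.ncard = B.ncard) := by
  have hfocal : ∃ B, M.IsBase B ∧ setWt γ B = ℓ := hbasic.exists_setWt_eq M.exists_isBase
  refine ⟨M.focalMatroid ℓ γ hbasic.1 hfocal, rfl, fun F => Iff.rfl, ?_⟩
  exact fun B B' hB hB' => hB'.1.ncard_eq_ncard_of_isBase hB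

/-- for a basic `ℓ`-cover `γ` of a matroid `M`, there is a matroid `M(γ)` on the
same ground set whose bases are exactly the focal bases of `γ`; in particular it has the same
rank as `M` (all its bases have the same cardinality as the bases of `M`). -/
theorem stmt5 {α : Type*} [Fintype α] (M : Matroid α) (hE : M.E = Set.univ)
    (ℓ : ℕ) (γ : α → ℕ) (hbasic : IsBasicCoverOn {F | M.IsBase F} ℓ γ) :
    ∃ M' : Matroid α, M'.E = M.E ∧
      (∀ F : Set α, M'.IsBase F ↔ (M.IsBase F ∧ setWt γ F = ℓ)) ∧
      (∀ B B' : Set α, M.IsBase B → M'.IsBase B' → B'.ncard = B.ncard) :=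
  stmt5_general M ℓ γ hbasic
end
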